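/- Let κ > 0, define the Kuramoto vector field F : ℝ^N → ℝ^N by F_i(Θ) = ν_i + (κ/N)·∑_{j=1}^N sin(θ_j − θ_i), and let Θ* ∈ ℝ^N be an equilibrium, F(Θ*) = 0, whose order parameter satisfies R(Θ*) < 1/√N. Then the Jacobian matrix J ∈ ℝ^{N×N} of F at Θ*, with entries J_{ik} = (∂F_i/∂θ_k)(Θ*), has a complex eigenvalue with strictly positive real part; in particular, the equilibrium Θ* is linearly unstable. -/

import Mathlib

/-!
At any point the diagonal of the Jacobian of the Kuramoto field is
`J i i = (κ / N) (1 - ∑ⱼ cos (θⱼ - θᵢ))`, and `∑ᵢ ∑ⱼ cos (θⱼ - θᵢ) = |∑ⱼ exp (i θⱼ)|² = N² R²`.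
Hence `tr J = κ (1 - N R²)`, which is positive when `R < 1 / √N`. The trace is the sum of the
complex eigenvalues, so one of them has positive real part.
-/

/-- Order parameter `R(x) = |(1/N) ∑ⱼ exp(i xⱼ)|`. -/
noncomputable def orderParam {N : ℕ} (x : Fin N → ℝ) : ℝ :=
  ‖(N : ℂ)⁻¹ * ∑ j, Complex.exp (Complex.I * (x j : ℂ))‖

open Complex

theorem Matrix.exists_mem_spectrum_re_pos_of_re_trace_pos {n : Type*} [Fintype n] [DecidableEq n]
    (A : Matrix n n ℂ) (h : 0 < A.trace.re) : ∃ μ ∈ spectrum ℂ A, 0 < μ.re := by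
  by_contra! hle
  have hroots : ∀ x ∈ A.charpoly.roots.map re, x ≤ 0 := by
    simp only [Multiset.mem_map, forall_exists_index, and_imp, forall_apply_eq_imp_iff₂]
    exact fun μ hμ => hle μ (A.mem_spectrum_of_isRoot_charpoly (Polynomial.isRoot_of_mem_roots hμ))
  have hsum := Multiset.sum_le_card_nsmul _ 0 hroots
  rw [smul_zero, ← coe_reAddGroupHom, ← map_multiset_sum, ← A.trace_eq_sum_roots_charpoly] at hsum
  exact hsum.not_gt h

theorem hasDerivAt_sum_sin_sub_update_self {ι : Type*} [Fintype ι] [DecidableEq ι]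
    (θ : ι → ℝ) (i : ι) :
    HasDerivAt (fun s => ∑ j, Real.sin (Function.update θ i s j - Function.update θ i s i))
      (1 - ∑ j, Real.cos (θ j - θ i)) (θ i) := by
  have hterm : ∀ j, HasDerivAt (fun s => Real.sin (Function.update θ i s j - s))
      (Real.cos (θ j - θ i) * (Pi.single (M := fun _ ↦ ℝ) i 1 j - 1)) (θ i) := fun j => by
    simpa using ((hasDerivAt_pi.1 (hasDerivAt_update θ i (θ i)) j).sub (hasDerivAt_id _)).sin
  simp only [Function.update_self]
  refine (HasDerivAt.fun_sum (u := Finset.univ) fun j _ => hterm j).congr_deriv ?_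
  simp [mul_sub, Pi.single_apply, Finset.sum_sub_distrib]

theorem sum_sum_cos_sub_eq_sq_norm_sum_exp {ι : Type*} [Fintype ι] (θ : ι → ℝ) :
    ∑ i, ∑ j, Real.cos (θ j - θ i) = ‖∑ j, exp (I * θ j)‖ ^ 2 := by
  have hterm : ∀ i j,
      starRingEnd ℂ (exp (I * θ i)) * exp (I * θ j) = exp ((θ j - θ i : ℝ) * I) := by
    intro i j
    rw [← exp_conj, map_mul, conj_ofReal, conj_I, ← exp_add]
    push_cast
    ring_nf
  rw [Complex.sq_norm, ← ofReal_re (normSq _), normSq_eq_conj_mul_self, map_sum,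
    Finset.sum_mul_sum]
  simp only [hterm, re_sum, exp_ofReal_mul_I_re]

theorem sq_norm_sum_exp_lt_of_orderParam_lt {N : ℕ} (θ : Fin N → ℝ)
    (h : orderParam θ < 1 / Real.sqrt N) : ‖∑ j, exp (I * θ j)‖ ^ 2 < N := by
  have hsqrt : 0 < Real.sqrt N := one_div_pos.1 ((norm_nonneg _).trans_lt h)
  have hN : (0 : ℝ) < N := Real.sqrt_pos.1 hsqrt
  have hR : orderParam θ = ‖∑ j, exp (I * θ j)‖ / N := by
    rw [orderParam, norm_mul, norm_inv, norm_natCast, inv_mul_eq_div]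
  rw [hR, div_lt_iff₀ hN, one_div_mul_eq_div, Real.div_sqrt] at h
  exact (Real.lt_sqrt (norm_nonneg _)).1 h

theorem low_order_parameter_equilibrium_unstable_general (N : ℕ)
    (κ : ℝ) (hκ : 0 < κ) (ν : Fin N → ℝ)
    (F : (Fin N → ℝ) → Fin N → ℝ)
    (hF : ∀ (Θ : Fin N → ℝ) (i : Fin N),
      F Θ i = ν i + κ / N * ∑ j, Real.sin (Θ j - Θ i))
    (Θs : Fin N → ℝ)
    (hR : orderParam Θs < 1 / Real.sqrt N)
    (J : Matrix (Fin N) (Fin N) ℝ)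
    (hJ : ∀ i k : Fin N,
      HasDerivAt (fun s => F (Function.update Θs k s) i) (J i k) (Θs k)) :
    ∃ μ : ℂ, μ ∈ spectrum ℂ (J.map (Complex.ofReal : ℝ → ℂ)) ∧ 0 < μ.re := by
  have hz := sq_norm_sum_exp_lt_of_orderParam_lt Θs hR
  have hN : (0 : ℝ) < N := (sq_nonneg _).trans_lt hz
  have hdiag : ∀ i, J i i = κ / N * (1 - ∑ j, Real.cos (Θs j - Θs i)) := fun i =>
    (hJ i i).unique <| by
      simpa only [hF] using ((hasDerivAt_sum_sin_sub_update_self Θs i).const_mul _).const_add (ν i)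
  have htrace : J.trace = κ / N * (N - ‖∑ j, exp (I * Θs j)‖ ^ 2) := by
    simp only [Matrix.trace, Matrix.diag_apply, hdiag, ← Finset.mul_sum, Finset.sum_sub_distrib,
      sum_sum_cos_sub_eq_sq_norm_sum_exp, Finset.sum_const, Finset.card_univ, Fintype.card_fin,
      nsmul_eq_mul, mul_one]
  have htrace_map : (J.map ofReal).trace = J.trace := (AddMonoidHom.map_trace ofRealHom J).symm
  apply Matrix.exists_mem_spectrum_re_pos_of_re_trace_pos
  rw [htrace_map, ofReal_re, htrace]
  exact mul_pos (div_pos hκ hN) (sub_pos.2 hz)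

/-- Proposition 6.1 (1): for `κ > 0`, any equilibrium of the Kuramoto vector
field whose order parameter is less than `1/√N` is linearly unstable: the
Jacobian of the vector field at the equilibrium has a complex eigenvalue with
strictly positive real part. -/
theorem low_order_parameter_equilibrium_unstable (N : ℕ) (hN : 1 ≤ N)
    (κ : ℝ) (hκ : 0 < κ) (ν : Fin N → ℝ)
    (F : (Fin N → ℝ) → Fin N → ℝ)
    (hF : ∀ (Θ : Fin N → ℝ) (i : Fin N),
      F Θ i = ν i + κ / N * ∑ j, Real.sin (Θ j - Θ i))
    (Θs : Fin N → ℝ) (heq : ∀ i, F Θs i = 0)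
    (hR : orderParam Θs < 1 / Real.sqrt N)
    (J : Matrix (Fin N) (Fin N) ℝ)
    (hJ : ∀ i k : Fin N,
      HasDerivAt (fun s => F (Function.update Θs k s) i) (J i k) (Θs k)) :
    ∃ μ : ℂ, μ ∈ spectrum ℂ (J.map (Complex.ofReal : ℝ → ℂ)) ∧ 0 < μ.re :=
  low_order_parameter_equilibrium_unstable_general N κ hκ ν F hF Θs hR J hJ
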